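/- arXiv:1804.08683 — 5 statements merged into one kernel-verified Lean document; each statement's English description precedes it below -/
import Mathlib

section
/- Let f_G be a connected plane directed acyclic graph with k₁ sources (vertices of in-degree 0) and k₂ sinks (vertices of out-degree 0), where every source and sink has alternation number 0. Define index(v) = α(v)/2 - 1 for a vertex v and index(φ) = α(φ)/2 - 1 for a face φ. Then Σ over all vertices v with index(v) ≥ 1 of index(v) is at most k₁ + k₂ - 2. -/
/-- Let `f_G` be a connected plane directed acyclic graph with vertex set `V`, face set `F` and
`E` arcs, with `k₁` sources `S` and `k₂` sinks `T`, where every source and sink has alternation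
number `0` (and every other vertex has both incoming and outgoing arcs, hence alternation
number at least `2`).  Alternation numbers are even, satisfy the identity
`Σ_v α(v) + Σ_φ α(φ) = 2E`, and since the graph is acyclic every face has `α(φ) ≥ 2`.
With `index(v) = α(v)/2 - 1`, the sum of `index(v)` over all vertices with `index(v) ≥ 1`
is at most `k₁ + k₂ - 2`. -/
theorem stmt_4 {V F : Type} [Fintype V] [DecidableEq V] [Fintype F]
    (E : ℕ) (αv : V → ℕ) (αf : F → ℕ)
    -- Euler's formula (connected plane graph)
    (heuler : (Fintype.card V : ℤ) - (E : ℤ) + (Fintype.card F : ℤ) = 2)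
    -- the vertex/face alternation identity
    (hsum : ∑ v, αv v + ∑ φ, αf φ = 2 * E)
    (hvev : ∀ v, Even (αv v)) (hfev : ∀ φ, Even (αf φ))
    -- acyclicity: no face boundary is a directed cycle
    (hface : ∀ φ, 2 ≤ αf φ)
    (S T : Finset V) (hST : Disjoint S T)
    -- sources and sinks have alternation number 0
    (hterm : ∀ v ∈ S ∪ T, αv v = 0)
    -- every non-terminal vertex has alternation number at least 2
    (hnonterm : ∀ v, v ∉ S ∪ T → 2 ≤ αv v) :
    ∑ v ∈ Finset.univ.filter (fun v => 1 ≤ (αv v : ℤ) / 2 - 1), ((αv v : ℤ) / 2 - 1)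
      ≤ (S.card : ℤ) + (T.card : ℤ) - 2 := by

  classical
  have hdiv : ∀ v : V, 2 * ((αv v : ℤ) / 2) = (αv v : ℤ) := by
    intro v
    obtain ⟨k, hk⟩ := hvev v
    have h : (αv v : ℤ) = 2 * k := by push_cast [hk]; ring
    rw [h, Int.mul_ediv_cancel_left _ two_ne_zero]
  -- total index sum over all vertices is ≤ -2
  have htotal : ∑ v, ((αv v : ℤ) / 2 - 1) ≤ -2 := by
    have hsumZ : (∑ v, (αv v : ℤ)) + ∑ φ, (αf φ : ℤ) = 2 * E := by
      exact_mod_cast hsum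
    have hFsum : (2 : ℤ) * Fintype.card F ≤ ∑ φ, (αf φ : ℤ) := by
      calc (2 : ℤ) * Fintype.card F = ∑ _φ : F, (2 : ℤ) := by
            simp [Finset.sum_const, mul_comm]
        _ ≤ ∑ φ, (αf φ : ℤ) := Finset.sum_le_sum fun φ _ => by exact_mod_cast hface φ
    have h1 : 2 * ∑ v, ((αv v : ℤ) / 2) = ∑ v, (αv v : ℤ) := by
      rw [Finset.mul_sum]; exact Finset.sum_congr rfl fun v _ => hdiv v
    have h2 : ∑ v, ((αv v : ℤ) / 2 - 1)
        = (∑ v, ((αv v : ℤ) / 2)) - Fintype.card V := by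
      rw [Finset.sum_sub_distrib]; simp
    rw [h2]
    linarith
  -- sum over non-saddles equals -(|S| + |T|)
  have hsplit := Finset.sum_filter_add_sum_filter_not Finset.univ
    (fun v => 1 ≤ (αv v : ℤ) / 2 - 1) (fun v => (αv v : ℤ) / 2 - 1)
  have hns : ∑ v ∈ Finset.univ.filter (fun v => ¬ (1 ≤ (αv v : ℤ) / 2 - 1)),
      ((αv v : ℤ) / 2 - 1) = -(((S ∪ T).card : ℤ)) := by
    have hcong : ∀ v ∈ Finset.univ.filter (fun v => ¬ (1 ≤ (αv v : ℤ) / 2 - 1)),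
        ((αv v : ℤ) / 2 - 1) = (if v ∈ S ∪ T then (-1 : ℤ) else 0) := by
      intro v hv
      rw [Finset.mem_filter] at hv
      by_cases hvST : v ∈ S ∪ T
      · simp [hvST, hterm v hvST]
      · simp only [hvST, if_false]
        have h2 : 2 ≤ (αv v : ℤ) := by exact_mod_cast hnonterm v hvST
        have := hdiv v
        omega
    rw [Finset.sum_congr rfl hcong, Finset.sum_ite_mem]
    have hsub : (Finset.univ.filter (fun v => ¬ (1 ≤ (αv v : ℤ) / 2 - 1))) ∩ (S ∪ T)
        = S ∪ T := by
      apply Finset.inter_eq_right.mpr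
      intro v hv
      rw [Finset.mem_filter]
      refine ⟨Finset.mem_univ v, ?_⟩
      simp [hterm v hv]
    rw [hsub]
    simp
  have hcard : ((S ∪ T).card : ℤ) = S.card + T.card := by
    rw [Finset.card_union_of_disjoint hST]; push_cast; ring
  rw [← hsplit, hns, hcard] at htotal
  linarith
end

section
/- Let G° be a flow network with integer arc capacities and no vertex capacities, and let f be a (possibly fractional) feasible flow in G° whose value v(f) is an integer and such that the net flow out of every terminal is an integer on the boundary (value constraints only at source s and sink t). Then there exists an integer-valued feasible flow f₁ in G° with v(f₁) = v(f) and |f(e) - f₁(e)| < 1 for every arc e. -/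
/-!
Among the flows `h` with `⌊f⌋ ≤ h ≤ ⌈f⌉` and the same net flow as `f` at every vertex (a compact
polytope containing `f`) pick an extreme point; we show it is integral. Since all net flows are
integers, no vertex meets exactly one arc with fractional flow, so the fractional arcs touch at most
as many vertices as there are such arcs. Their incidence vectors live in a space of dimension one
less (net flows sum to zero), hence some nonzero circulation is carried by the fractional arcs, and
pushing it in both directions shows the point was not extreme.
-/

open Finset AddSubgroup Filter Topology

namespace FlowRounding

variable {V : Type}

def arcIndicator [DecidableEq V] (e : V × V) : V → V → ℝ := fun a b => if (a, b) = e then 1 else 0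

theorem sum_smul_arcIndicator_apply [DecidableEq V] {F : Finset (V × V)} (q : F → ℝ) (u v : V) :
    (∑ e : F, q e • arcIndicator (e : V × V)) u v =
      if h : (u, v) ∈ F then q ⟨(u, v), h⟩ else 0 := by
  simp only [Finset.sum_apply, Pi.smul_apply, arcIndicator, smul_eq_mul, mul_ite, mul_one,
    mul_zero]
  split_ifs with h
  · rw [Fintype.sum_eq_single ⟨(u, v), h⟩ fun e he => if_neg fun h' => he (Subtype.ext h').symm,
      if_pos rfl]
  · exact sum_eq_zero fun e _ => if_neg fun (h' : (u, v) = e) => h (h' ▸ e.2)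

variable [Fintype V]

def net : (V → V → ℝ) →ₗ[ℝ] V → ℝ where
  toFun g v := ∑ w, g v w - ∑ u, g u v
  map_add' g h := by
    ext v
    simp only [Pi.add_apply, sum_add_distrib]
    ring
  map_smul' a g := by
    ext v
    simp only [Pi.smul_apply, smul_eq_mul, ← mul_sum, RingHom.id_apply]
    ring

theorem net_apply (g : V → V → ℝ) (v : V) : net g v = ∑ w, g v w - ∑ u, g u v := rfl

theorem sum_net_eq_zero (g : V → V → ℝ) : ∑ v, net g v = 0 := by
  simp only [net_apply, sum_sub_distrib]
  rw [sum_comm, sub_self]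

theorem net_mem_of_net_source_mem {H : AddSubgroup ℝ} {g : V → V → ℝ} {s t : V}
    (hs : net g s ∈ H) (hst : ∀ v, v ≠ s → v ≠ t → net g v ∈ H) (v : V) : net g v ∈ H := by
  classical
  have hne_t : ∀ w, w ≠ t → net g w ∈ H := fun w hwt =>
    if hws : w = s then hws ▸ hs else hst w hws hwt
  by_cases hvt : v = t
  · subst hvt
    have hsplit := add_sum_erase univ (net g) (mem_univ v)
    rw [sum_net_eq_zero, add_eq_zero_iff_eq_neg] at hsplit
    rw [hsplit]
    exact neg_mem (sum_mem fun w hw => hne_t w (ne_of_mem_erase hw))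
  · exact hne_t v hvt

theorem sum_mem_iff_card_filter_notMem_eq_zero {ι G : Type*} [Fintype ι] [AddCommGroup G]
    {H : AddSubgroup G} {a : ι → G} [DecidablePred (a · ∉ H)] (h : #{i | a i ∉ H} ≤ 1) :
    ∑ i, a i ∈ H ↔ #{i | a i ∉ H} = 0 := by
  classical
  rcases Nat.le_one_iff_eq_zero_or_eq_one.mp h with h0 | h1
  · simp only [h0, iff_true]
    rw [card_eq_zero, filter_eq_empty_iff] at h0
    exact sum_mem fun i _ => not_not.mp (h0 (mem_univ i))
  · simp only [h1, one_ne_zero, iff_false]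
    obtain ⟨j, hj⟩ := card_eq_one.mp h1
    have hj_notMem : a j ∉ H := by
      have : j ∈ ({j} : Finset ι) := mem_singleton_self j
      rw [← hj, mem_filter] at this
      exact this.2
    have hmem : ∀ i ∈ univ.erase j, a i ∈ H := fun i hi => by
      by_contra hi'
      have : i ∈ ({j} : Finset ι) := hj ▸ mem_filter.mpr ⟨mem_univ i, hi'⟩
      exact ne_of_mem_erase hi (mem_singleton.mp this)
    rw [← add_sum_erase univ a (mem_univ j), add_mem_cancel_right (sum_mem hmem)]
    exact hj_notMem

open Classical in
theorem card_notMem_add_card_notMem_ne_one {H : AddSubgroup ℝ} {g : V → V → ℝ} {v : V}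
    (hv : net g v ∈ H) : #{w | g v w ∉ H} + #{u | g u v ∉ H} ≠ 1 := by
  intro h1
  have hout := sum_mem_iff_card_filter_notMem_eq_zero (H := H) (a := g v) (by omega)
  have hin := sum_mem_iff_card_filter_notMem_eq_zero (H := H) (a := (g · v)) (by omega)
  rw [net_apply] at hv
  have : ∑ w, g v w ∈ H ↔ ∑ u, g u v ∈ H :=
    ⟨fun h => by simpa using sub_mem h hv, fun h => by simpa using add_mem hv h⟩
  rw [hout, hin] at this
  omega

section Circulation

variable [DecidableEq V]

def degree (F : Finset (V × V)) (v : V) : ℕ := #{w | (v, w) ∈ F} + #{u | (u, v) ∈ F}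

theorem sum_degree (F : Finset (V × V)) : ∑ v, degree F v = 2 * #F := by
  have hcard : #F = ∑ v, ∑ w, if (v, w) ∈ F then 1 else 0 := by
    rw [← Fintype.sum_prod_type', sum_boole, filter_univ_mem, Nat.cast_id]
  simp only [degree, sum_add_distrib, card_filter]
  rw [sum_comm (f := fun w u => if (u, w) ∈ F then 1 else 0), ← hcard, two_mul]

theorem card_filter_degree_ne_zero_le (F : Finset (V × V)) (hF : ∀ v, degree F v ≠ 1) :
    #{v | degree F v ≠ 0} ≤ #F := by
  have h2 : ∀ v ∈ ({v | degree F v ≠ 0} : Finset V), 2 ≤ degree F v := fun v hv => by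
    have := (mem_filter.mp hv).2; have := hF v; omega
  have := calc #{v | degree F v ≠ 0} * 2
      ≤ ∑ v ∈ {v | degree F v ≠ 0}, degree F v := card_nsmul_le_sum _ _ 2 h2
    _ ≤ ∑ v, degree F v := sum_le_univ_sum_of_nonneg fun _ => Nat.zero_le _
    _ = 2 * #F := sum_degree F
  omega

theorem net_apply_eq_zero_of_degree_eq_zero {F : Finset (V × V)} {p : V → V → ℝ}
    (hp : ∀ u v, p u v ≠ 0 → (u, v) ∈ F) {x : V} (hx : degree F x = 0) : net p x = 0 := by
  simp only [degree, Nat.add_eq_zero_iff, card_eq_zero, filter_eq_empty_iff, mem_univ,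
    true_implies] at hx
  rw [net_apply, sum_eq_zero fun w _ => ?_, sum_eq_zero fun u _ => ?_, sub_self]
  · exact not_not.mp fun h => hx.2 (hp _ _ h)
  · exact not_not.mp fun h => hx.1 (hp _ _ h)

theorem net_eq_zero_of_forall_ne {p : V → V → ℝ} {v₀ : V} (h : ∀ x, x ≠ v₀ → net p x = 0) :
    net p = 0 := by
  ext x
  by_cases hx : x = v₀
  · have := sum_net_eq_zero p
    rwa [Fintype.sum_eq_single v₀ h, ← hx] at this
  · exact h x hx

theorem exists_circulation_of_degree_ne_one {F : Finset (V × V)} (hF : F.Nonempty)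
    (hdeg : ∀ v, degree F v ≠ 1) :
    ∃ p : V → V → ℝ, p ≠ 0 ∧ (∀ u v, p u v ≠ 0 → (u, v) ∈ F) ∧ net p = 0 := by
  set S : Finset V := {v | degree F v ≠ 0}
  obtain ⟨e₀, he₀⟩ := hF
  have hv₀ : e₀.1 ∈ S := by
    rw [mem_filter]
    refine ⟨mem_univ _, ?_⟩
    have : 0 < #{w | (e₀.1, w) ∈ F} := card_pos.mpr ⟨e₀.2, by simpa using he₀⟩
    unfold degree
    omega
  -- net flows supported on `F` vanish off `S` and sum to zero, so one vertex of `S` can be dropped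
  let χ : F → S.erase e₀.1 → ℝ := fun e x => net (arcIndicator (e : V × V)) (x : V)
  have hχ : ¬ LinearIndependent ℝ χ := fun hind => by
    have := hind.fintype_card_le_finrank
    rw [Module.finrank_fintype_fun_eq_card, Fintype.card_coe, Fintype.card_coe,
      card_erase_of_mem hv₀] at this
    have : #S ≤ #F := card_filter_degree_ne_zero_le F hdeg
    have := card_pos.mpr ⟨_, hv₀⟩
    omega
  obtain ⟨q, hq, e₁, he₁⟩ := Fintype.not_linearIndependent_iff.mp hχ
  set p : V → V → ℝ := ∑ e : F, q e • arcIndicator (e : V × V) with hp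
  have hp_supp : ∀ u v, p u v ≠ 0 → (u, v) ∈ F := fun u v h => by
    by_contra huv
    rw [hp, sum_smul_arcIndicator_apply, dif_neg huv] at h
    exact h rfl
  refine ⟨p, fun h0 => he₁ ?_, hp_supp, net_eq_zero_of_forall_ne (v₀ := e₀.1) fun x hx => ?_⟩
  · have := congrFun (congrFun h0 e₁.1.1) e₁.1.2
    rwa [hp, sum_smul_arcIndicator_apply, dif_pos e₁.2] at this
  · by_cases hxS : x ∈ S
    · simpa [χ, p, map_sum] using congrFun hq ⟨x, mem_erase.mpr ⟨hx, hxS⟩⟩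
    · exact net_apply_eq_zero_of_degree_eq_zero hp_supp (by simpa [S] using hxS)

end Circulation

theorem eventually_add_smul_mem_Icc {l u h p : V → V → ℝ} (hh : h ∈ Set.Icc l u)
    (hp : ∀ x y, p x y ≠ 0 → l x y < h x y ∧ h x y < u x y) :
    ∀ᶠ t in 𝓝 (0 : ℝ), h + t • p ∈ Set.Icc l u := by
  simp only [Set.mem_Icc, Pi.le_def, Pi.add_apply, Pi.smul_apply, smul_eq_mul,
    ← forall_and, eventually_all]
  intro x y
  by_cases hpxy : p x y = 0
  · simp only [hpxy, mul_zero, add_zero]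
    exact .of_forall fun _ => ⟨hh.1 x y, hh.2 x y⟩
  · have hlim : Tendsto (fun t : ℝ => h x y + t * p x y) (𝓝 0) (𝓝 (h x y)) := by
      exact Continuous.tendsto' (by fun_prop) 0 _ (by simp)
    exact ((hlim.eventually (lt_mem_nhds (hp x y hpxy).1)).and
      (hlim.eventually (gt_mem_nhds (hp x y hpxy).2))).mono fun _ ht => ⟨ht.1.le, ht.2.le⟩

def flowPolytope (l u : V → V → ℝ) (b : V → ℝ) : Set (V → V → ℝ) :=
  Set.Icc l u ∩ net ⁻¹' {b}

theorem isCompact_flowPolytope (l u : V → V → ℝ) (b : V → ℝ) :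
    IsCompact (flowPolytope l u b) :=
  isCompact_Icc.inter_right <|
    isClosed_singleton.preimage (LinearMap.continuous_of_finiteDimensional net)

theorem mem_zmultiples_of_mem_extremePoints_flowPolytope {l u : V → V → ℝ} {b : V → ℝ}
    (hl : ∀ x y, l x y ∈ zmultiples 1) (hu : ∀ x y, u x y ∈ zmultiples 1)
    (hb : ∀ v, b v ∈ zmultiples 1) {h : V → V → ℝ}
    (hh : h ∈ (flowPolytope l u b).extremePoints ℝ) (x y : V) : h x y ∈ zmultiples 1 := by
  classical
  obtain ⟨⟨hbox, hnet : net h = b⟩, hext⟩ := hh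
  set F : Finset (V × V) := {e | h e.1 e.2 ∉ zmultiples 1}
  by_contra hxy
  have hdeg : ∀ v, degree F v ≠ 1 := fun v => by
    simpa [degree, F] using card_notMem_add_card_notMem_ne_one (hnet ▸ hb v : net h v ∈ _)
  obtain ⟨p, hp0, hpF, hpnet⟩ :=
    exists_circulation_of_degree_ne_one ⟨(x, y), by simpa [F] using hxy⟩ hdeg
  have hstrict : ∀ x y, p x y ≠ 0 → l x y < h x y ∧ h x y < u x y := fun x y hp => by
    have hfrac : h x y ∉ zmultiples 1 := by simpa [F] using hpF x y hp
    exact ⟨(hbox.1 x y).lt_of_ne fun he => hfrac (he ▸ hl x y),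
      (hbox.2 x y).lt_of_ne fun he => hfrac (he ▸ hu x y)⟩
  have hev := eventually_add_smul_mem_Icc hbox hstrict
  have hev_neg := (continuous_neg.tendsto' (0 : ℝ) 0 neg_zero).eventually hev
  obtain ⟨t, ⟨ht_pos, ht_neg⟩, ht⟩ :=
    (((hev.and hev_neg).filter_mono nhdsWithin_le_nhds).and self_mem_nhdsWithin).exists
      (f := 𝓝[>] (0 : ℝ))
  have hmem : ∀ r : ℝ, h + r • p ∈ Set.Icc l u → h + r • p ∈ flowPolytope l u b :=
    fun r hr => ⟨hr, by simp [map_add, map_smul, hpnet, hnet]⟩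
  have hseg : h ∈ openSegment ℝ (h + t • p) (h + (-t) • p) :=
    ⟨1 / 2, 1 / 2, by norm_num, by norm_num, by norm_num, by module⟩
  have htp : t • p = 0 := by
    simpa using hext (hmem t ht_pos) (hmem (-t) ht_neg) hseg
  exact hp0 ((smul_eq_zero.mp htp).resolve_left ht.ne')

end FlowRounding

open FlowRounding

theorem stmt_6_general {V : Type} [Fintype V]
    (c : V → V → ℤ) (s t : V)
    (f : V → V → ℝ)
    (hf0 : ∀ u v, 0 ≤ f u v) (hfc : ∀ u v, f u v ≤ (c u v : ℝ))
    (hcons : ∀ v, v ≠ s → v ≠ t → ∑ u, f u v = ∑ w, f v w)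
    (hval : ∃ z : ℤ, ∑ w, f s w - ∑ u, f u s = (z : ℝ)) :
    ∃ f₁ : V → V → ℤ,
      (∀ u v, 0 ≤ f₁ u v) ∧ (∀ u v, f₁ u v ≤ c u v) ∧
      (∀ v, v ≠ s → v ≠ t → ∑ u, ((f₁ u v : ℤ) : ℝ) = ∑ w, ((f₁ v w : ℤ) : ℝ)) ∧
      (∑ w, ((f₁ s w : ℤ) : ℝ) - ∑ u, ((f₁ u s : ℤ) : ℝ) = ∑ w, f s w - ∑ u, f u s) ∧
      (∀ u v, |f u v - ((f₁ u v : ℤ) : ℝ)| < 1) := by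
  have hnet_int : ∀ v, net f v ∈ zmultiples (1 : ℝ) := by
    obtain ⟨z, hz⟩ := hval
    refine net_mem_of_net_source_mem (t := t) (hz ▸ intCast_mem_zmultiples_one z)
      fun v hvs hvt => ?_
    rw [net_apply, hcons v hvs hvt, sub_self]
    exact zero_mem _
  set K := flowPolytope (fun x y => (⌊f x y⌋ : ℝ)) (fun x y => (⌈f x y⌉ : ℝ)) (net f)
  have hfK : f ∈ K := ⟨⟨fun x y => Int.floor_le _, fun x y => Int.le_ceil _⟩, rfl⟩
  obtain ⟨h, hh⟩ := (isCompact_flowPolytope _ _ _).extremePoints_nonempty ⟨f, hfK⟩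
  choose g hg using fun x y => mem_zmultiples_iff.mp <|
    mem_zmultiples_of_mem_extremePoints_flowPolytope (fun _ _ => intCast_mem_zmultiples_one _)
      (fun _ _ => intCast_mem_zmultiples_one _) hnet_int hh x y
  simp only [zsmul_one] at hg
  obtain ⟨⟨hlo, hhi⟩, hneth : net h = net f⟩ := hh.1
  have hlo' (x y : V) : (⌊f x y⌋ : ℝ) ≤ g x y := hg x y ▸ hlo x y
  have hhi' (x y : V) : (g x y : ℝ) ≤ ⌈f x y⌉ := hg x y ▸ hhi x y
  refine ⟨g, fun x y => ?_, fun x y => ?_, fun v hvs hvt => ?_, ?_, fun x y => ?_⟩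
  · exact_mod_cast (Int.floor_nonneg.mpr (hf0 x y)).trans (Int.cast_le.mp (hlo' x y))
  · exact Int.cast_le.mp ((hhi' x y).trans (Int.cast_le.mpr (Int.ceil_le.mpr (hfc x y))))
  · have := congrFun hneth v
    simp only [net_apply, ← hg] at this
    linarith [hcons v hvs hvt]
  · simpa only [net_apply, ← hg] using congrFun hneth s
  · rw [abs_sub_lt_iff]
    constructor
    · linarith [hlo' x y, Int.lt_floor_add_one (f x y)]
    · linarith [hhi' x y, Int.ceil_lt_add_one (f x y)]

/-- Let `G°` be a flow network with integer arc capacities and no vertex capacities, with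
source `s` and sink `t`, and let `f` be a (possibly fractional) feasible flow in `G°` whose
value is an integer. Then there exists an integer-valued feasible flow `f₁` in `G°` of the
same value with `|f(e) - f₁(e)| < 1` on every arc `e`. -/
theorem stmt_6 {V : Type} [Fintype V] [DecidableEq V]
    (c : V → V → ℤ) (s t : V) (hst : s ≠ t)
    (f : V → V → ℝ)
    (hf0 : ∀ u v, 0 ≤ f u v) (hfc : ∀ u v, f u v ≤ (c u v : ℝ))
    (hcons : ∀ v, v ≠ s → v ≠ t → ∑ u, f u v = ∑ w, f v w)
    (hval : ∃ z : ℤ, ∑ w, f s w - ∑ u, f u s = (z : ℝ)) :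
    ∃ f₁ : V → V → ℤ,
      (∀ u v, 0 ≤ f₁ u v) ∧ (∀ u v, f₁ u v ≤ c u v) ∧
      (∀ v, v ≠ s → v ≠ t → ∑ u, ((f₁ u v : ℤ) : ℝ) = ∑ w, ((f₁ v w : ℤ) : ℝ)) ∧
      (∑ w, ((f₁ s w : ℤ) : ℝ) - ∑ u, ((f₁ u s : ℤ) : ℝ) = ∑ w, f s w - ∑ u, f u s) ∧
      (∀ u v, |f u v - ((f₁ u v : ℤ) : ℝ)| < 1) :=
  stmt_6_general c s t f hf0 hfc hcons hval
end

section
/- Let G be a planar flow network with vertex capacities and let G° be its extended graph, obtained by replacing each finitely-capacitated vertex v of degree d with an undirected cycle C_v of d vertices, each cycle edge having capacity c(v)/2, with incident edges attached to distinct cycle vertices preserving planarity and cyclic order. Then every feasible flow f in G (respecting both arc and vertex capacities) has an extension f° that is a feasible flow in G° (respecting arc capacities of G°). -/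
/-- The cyclically next slot on the cycle `C_v` replacing a vertex of degree `n`. -/
def nxtSlot (n : ℕ) (hn : 0 < n) (i : Fin n) : Fin n :=
  ⟨(i.val + 1) % n, Nat.mod_lt _ hn⟩

lemma cycle_route {n : ℕ} (hn : 0 < n) (h : Fin n → ℝ) (c : ℝ)
    (hsum : ∑ i, h i = 0)
    (hub : ∀ A : Finset (Fin n), ∑ i ∈ A, h i ≤ c)
    (hlb : ∀ A : Finset (Fin n), -c ≤ ∑ i ∈ A, h i) :
    ∃ g : Fin n → ℝ, ∀ i, |g i| ≤ c / 2 ∧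
      g (nxtSlot n hn i) = g i - h (nxtSlot n hn i) := by
  haveI : NeZero n := ⟨hn.ne'⟩
  set P : Fin n → ℝ := fun i => ∑ j ∈ Finset.univ.filter (fun j => j ≤ i), h j with hP
  -- step property
  have hstep : ∀ i : Fin n, P (nxtSlot n hn i) = P i + h (nxtSlot n hn i) := by
    intro i
    rcases Nat.lt_or_ge (i.val + 1) n with hi | hi
    · have hnv : (nxtSlot n hn i).val = i.val + 1 := Nat.mod_eq_of_lt hi
      have hset : Finset.univ.filter (fun j => j ≤ nxtSlot n hn i)
          = insert (nxtSlot n hn i) (Finset.univ.filter (fun j => j ≤ i)) := by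
        ext j
        simp only [Finset.mem_filter, Finset.mem_univ, true_and, Finset.mem_insert,
          Fin.le_def, hnv]
        rw [Fin.ext_iff, hnv]
        omega
      have hnm : nxtSlot n hn i ∉ Finset.univ.filter (fun j => j ≤ i) := by
        simp only [Finset.mem_filter, Finset.mem_univ, true_and, Fin.le_def, hnv]
        omega
      rw [hP]
      simp only [hset, Finset.sum_insert hnm]
      ring
    · have hin : i.val + 1 = n := le_antisymm i.isLt hi
      have hnv : (nxtSlot n hn i).val = 0 := by simp [nxtSlot, hin]
      have h1 : Finset.univ.filter (fun j => j ≤ nxtSlot n hn i) = {nxtSlot n hn i} := by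
        ext j
        simp only [Finset.mem_filter, Finset.mem_univ, true_and, Finset.mem_singleton,
          Fin.le_def, hnv, Nat.le_zero]
        exact ⟨fun hj => Fin.ext (by omega), fun hj => by simp [hj, hnv]⟩
      have h2 : Finset.univ.filter (fun j => j ≤ i) = Finset.univ := by
        ext j
        simp only [Finset.mem_filter, Finset.mem_univ, true_and, Fin.le_def, iff_true]
        have := j.isLt
        omega
      rw [hP]
      simp only [h1, h2, Finset.sum_singleton, hsum]
      ring
  -- difference bound
  have hdiff : ∀ a b : Fin n, P a - P b ≤ c := by
    have key : ∀ a b : Fin n, b ≤ a →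
        P a - P b = ∑ j ∈ Finset.univ.filter (fun j => j ≤ a ∧ ¬ j ≤ b), h j := by
      intro a b hba
      have := Finset.sum_filter_add_sum_filter_not (Finset.univ.filter (fun j => j ≤ a))
        (fun j => j ≤ b) h
      rw [Finset.filter_filter, Finset.filter_filter] at this
      have hb : Finset.univ.filter (fun j => j ≤ a ∧ j ≤ b)
          = Finset.univ.filter (fun j => j ≤ b) := by
        ext j
        simp only [Finset.mem_filter, Finset.mem_univ, true_and]
        exact ⟨fun hj => hj.2, fun hj => ⟨le_trans hj hba, hj⟩⟩
      rw [hb] at this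
      rw [hP]
      linarith [this]
    intro a b
    rcases le_total b a with hba | hab
    · rw [key a b hba]; exact hub _
    · have := key b a hab
      have := hlb (Finset.univ.filter (fun j => j ≤ b ∧ ¬ j ≤ a))
      linarith
  -- max and min
  obtain ⟨a, -, ha⟩ := Finset.exists_mem_eq_sup' (Finset.univ_nonempty (α := Fin n)) P
  obtain ⟨b, -, hb⟩ := Finset.exists_mem_eq_inf' (Finset.univ_nonempty (α := Fin n)) P
  set M := Finset.univ.sup' (Finset.univ_nonempty (α := Fin n)) P
  set m := Finset.univ.inf' (Finset.univ_nonempty (α := Fin n)) P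
  have hMm : M - m ≤ c := by rw [ha, hb]; exact hdiff a b
  refine ⟨fun i => (M + m) / 2 - P i, fun i => ⟨?_, ?_⟩⟩
  · have h1 : P i ≤ M := Finset.le_sup' P (Finset.mem_univ i)
    have h2 : m ≤ P i := Finset.inf'_le P (Finset.mem_univ i)
    rw [abs_le]
    constructor <;> linarith
  · dsimp only; rw [hstep i]; ring

/-- Every feasible flow `f` in a planar flow network `G` with vertex capacities has a feasible
extension `f°` to the extended graph `G°`.

`G` is presented by its arc-ends: around each vertex `v` of degree `d v` the arc-ends are the
slots `(v, i)`, `i : Fin (d v)`, listed in their cyclic (planar) order; a fixed-point-free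
involution `π` pairs the two ends of each arc, and `isTail` marks the tail end of each arc.
A flow assigns a value `f a` to the arc whose tail end is `a`; it is feasible when it is
nonnegative, respects the arc capacities, is conserved at every non-terminal vertex, and the
inflow of each (capacitated, i.e. non-terminal) vertex `v` is at most `c v`.

In `G°` each capacitated vertex `v` is replaced by the cycle `C_v` on its `d v` slots, each
cycle edge having capacity `c v / 2` (an undirected edge, i.e. traversable both ways); the
extension keeps `f` on all arcs of `G` and routes, on each `C_v`, a signed amount `g v i`
from slot `i` to slot `i+1` satisfying conservation at every slot and `|g v i| ≤ c v / 2`. -/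
theorem stmt_9 {V : Type} [Fintype V] [DecidableEq V]
    (d : V → ℕ) (hd : ∀ v, 0 < d v)
    (π : (Σ v : V, Fin (d v)) ≃ (Σ v : V, Fin (d v)))
    (hinv : ∀ a, π (π a) = a) (hfix : ∀ a, π a ≠ a)
    (isTail : (Σ v : V, Fin (d v)) → Bool)
    (hor : ∀ a, isTail (π a) = ! isTail a)
    (cap : (Σ v : V, Fin (d v)) → ℝ)
    (c : V → ℝ) (hc : ∀ v, 0 ≤ c v)
    (S T : Finset V)
    (f : (Σ v : V, Fin (d v)) → ℝ)
    (hf0 : ∀ a, 0 ≤ f a)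
    (hfc : ∀ a, isTail a = true → f a ≤ cap a)
    -- conservation at every non-terminal vertex
    (hcons : ∀ v, v ∉ S ∪ T →
      ∑ i : Fin (d v), (if isTail ⟨v, i⟩ then f ⟨v, i⟩ else - f (π ⟨v, i⟩)) = 0)
    -- vertex capacity constraint: the inflow of v is at most c v
    (hvc : ∀ v, v ∉ S ∪ T →
      ∑ i : Fin (d v), (if isTail ⟨v, i⟩ then 0 else f (π ⟨v, i⟩)) ≤ c v) :
    ∃ g : (v : V) → Fin (d v) → ℝ,
      ∀ v, v ∉ S ∪ T → ∀ i : Fin (d v),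
        |g v i| ≤ c v / 2 ∧
        g v (nxtSlot (d v) (hd v) i) = g v i -
          (if isTail ⟨v, nxtSlot (d v) (hd v) i⟩ then f ⟨v, nxtSlot (d v) (hd v) i⟩
           else - f (π ⟨v, nxtSlot (d v) (hd v) i⟩)) := by
  have H : ∀ v : V, ∃ g : Fin (d v) → ℝ, v ∉ S ∪ T → ∀ i : Fin (d v),
      |g i| ≤ c v / 2 ∧
      g (nxtSlot (d v) (hd v) i) = g i -
        (if isTail ⟨v, nxtSlot (d v) (hd v) i⟩ then f ⟨v, nxtSlot (d v) (hd v) i⟩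
         else - f (π ⟨v, nxtSlot (d v) (hd v) i⟩)) := by
    intro v
    by_cases hv : v ∈ S ∪ T
    · exact ⟨0, fun h => absurd hv h⟩
    set h : Fin (d v) → ℝ :=
      fun i => if isTail ⟨v, i⟩ then f ⟨v, i⟩ else - f (π ⟨v, i⟩) with hh
    have hsum : ∑ i, h i = 0 := hcons v hv
    -- outflow = inflow ≤ c v
    have hsplit : ∀ i : Fin (d v),
        h i = (if isTail ⟨v, i⟩ then f ⟨v, i⟩ else 0)
            - (if isTail ⟨v, i⟩ then 0 else f (π ⟨v, i⟩)) := by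
      intro i; by_cases hi : isTail ⟨v, i⟩ <;> simp [hh, hi]
    have hout : ∑ i : Fin (d v), (if isTail ⟨v, i⟩ then f ⟨v, i⟩ else 0) ≤ c v := by
      have := hvc v hv
      have h2 : ∑ i : Fin (d v), (if isTail ⟨v, i⟩ then f ⟨v, i⟩ else 0)
          - ∑ i : Fin (d v), (if isTail ⟨v, i⟩ then 0 else f (π ⟨v, i⟩)) = 0 := by
        calc ∑ i : Fin (d v), (if isTail ⟨v, i⟩ then f ⟨v, i⟩ else 0)
            - ∑ i : Fin (d v), (if isTail ⟨v, i⟩ then 0 else f (π ⟨v, i⟩))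
            = ∑ i, h i := by
              rw [← Finset.sum_sub_distrib]
              exact Finset.sum_congr rfl fun i _ => (hsplit i).symm
          _ = 0 := hsum
      linarith
    have hinle := hvc v hv
    have hub : ∀ A : Finset (Fin (d v)), ∑ i ∈ A, h i ≤ c v := by
      intro A
      calc ∑ i ∈ A, h i ≤ ∑ i ∈ A, (if isTail ⟨v, i⟩ then f ⟨v, i⟩ else 0) := by
            refine Finset.sum_le_sum fun i _ => ?_
            by_cases hi : isTail ⟨v, i⟩ <;> simp [hh, hi, hf0, neg_nonpos.mpr (hf0 _)]
        _ ≤ ∑ i : Fin (d v), (if isTail ⟨v, i⟩ then f ⟨v, i⟩ else 0) := by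
            refine Finset.sum_le_sum_of_subset_of_nonneg (Finset.subset_univ A)
              fun i _ _ => ?_
            by_cases hi : isTail ⟨v, i⟩ <;> simp [hi, hf0]
        _ ≤ c v := hout
    have hlb : ∀ A : Finset (Fin (d v)), -(c v) ≤ ∑ i ∈ A, h i := by
      intro A
      have step1 : -∑ i ∈ A, (if isTail ⟨v, i⟩ then 0 else f (π ⟨v, i⟩)) ≤ ∑ i ∈ A, h i := by
        rw [← Finset.sum_neg_distrib]
        refine Finset.sum_le_sum fun i _ => ?_
        by_cases hi : isTail ⟨v, i⟩ <;> simp [hh, hi, hf0]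
      have step2 : ∑ i ∈ A, (if isTail ⟨v, i⟩ then 0 else f (π ⟨v, i⟩))
          ≤ ∑ i : Fin (d v), (if isTail ⟨v, i⟩ then 0 else f (π ⟨v, i⟩)) := by
        refine Finset.sum_le_sum_of_subset_of_nonneg (Finset.subset_univ A) fun i _ _ => ?_
        by_cases hi : isTail ⟨v, i⟩ <;> simp [hi, hf0]
      linarith
    obtain ⟨g, hg⟩ := cycle_route (hd v) h (c v) hsum hub hlb
    exact ⟨g, fun _ => hg⟩
  choose g hg using H
  exact ⟨g, fun v hv i => hg v hv i⟩
end

section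
/- Let f° be a feasible flow in the extended graph G° whose restriction f to G is acyclic. For each vertex v of G, the excess satisfies ex(f, v) ≤ index(v) · c(v), where index(v) = α(v)/2 - 1 is the index of v in the flow graph of f. In particular f violates the capacity constraint only at saddles of the flow graph. -/
/-- Excess is bounded by index times capacity (Lemma `small-excess`, at a vertex `v`).

Let `f°` be a feasible flow in the extended graph `G°` whose restriction `f` to `G` is
acyclic, and let `v` be a vertex of `G` of degree `d`, replaced in `G°` by the cycle `C_v`
whose slots are indexed cyclically by `ZMod d`. Let `x i` be the net flow carried into
slot `i` of `C_v` by the incident arc of the flow graph `f_G` (positive on incoming arcs,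
nonpositive otherwise), and let `g i` be the flow of `f°` on the cycle arc from slot `i` to
slot `i+1` (signed), so feasibility in `G°` means `|g i| ≤ c(v)/2`, and conservation at each
slot means `g i = g (i-1) + x i`. The incoming arcs form `index(v)+1` contiguous groups in
the cyclic order, where the number of groups is the number of slots `i` with `x i > 0` and
`x (i-1) ≤ 0`. Then the inflow `f^in(v)` is at most `(index(v)+1)·c(v)`, and hence the
excess satisfies `ex(f,v) = max 0 (f^in(v) - c(v)) ≤ index(v)·c(v)`. -/
theorem stmt_10 (d : ℕ) [NeZero d] (c : ℝ) (hc : 0 ≤ c)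
    (x g : ZMod d → ℝ)
    (hg : ∀ i, |g i| ≤ c / 2)
    (hcons : ∀ i, g i = g (i - 1) + x i)
    (hpos : ∃ i, 0 < x i) :
    (∑ i ∈ Finset.univ.filter (fun i => 0 < x i), x i)
        ≤ ((Finset.univ.filter (fun i => 0 < x i ∧ x (i - 1) ≤ 0)).card : ℝ) * c ∧
    max 0 ((∑ i ∈ Finset.univ.filter (fun i => 0 < x i), x i) - c)
        ≤ (((Finset.univ.filter (fun i => 0 < x i ∧ x (i - 1) ≤ 0)).card : ℝ) - 1) * c := by
  classical
  set P := Finset.univ.filter (fun i : ZMod d => 0 < x i) with hP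
  set K := Finset.univ.filter (fun i : ZMod d => 0 < x i ∧ x (i - 1) ≤ 0) with hK
  set Q := P.image (fun i => i - 1) with hQdef
  have hinj : Function.Injective (fun i : ZMod d => i - 1) := sub_left_injective
  have hmemQ : ∀ j : ZMod d, j ∈ Q ↔ j + 1 ∈ P := by
    intro j
    simp only [hQdef, Finset.mem_image]
    constructor
    · rintro ⟨i, hi, rfl⟩
      simpa [sub_add_cancel] using hi
    · intro h; exact ⟨j + 1, h, by ring⟩
  have hSe : (∑ i ∈ P, x i) = ∑ i ∈ P \ Q, g i - ∑ j ∈ Q \ P, g j := by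
    have h1 : (∑ i ∈ P, x i) = ∑ i ∈ P, g i - ∑ i ∈ P, g (i - 1) := by
      rw [← Finset.sum_sub_distrib]
      exact Finset.sum_congr rfl fun i _ => by have := hcons i; linarith
    have h2 : ∑ i ∈ P, g (i - 1) = ∑ j ∈ Q, g j :=
      (Finset.sum_image (fun a _ b _ h => hinj h)).symm
    rw [h1, h2, ← Finset.sum_inter_add_sum_sdiff P Q g, ← Finset.sum_inter_add_sum_sdiff Q P g,
      Finset.inter_comm]
    ring
  have hcardQ : Q.card = P.card := Finset.card_image_of_injective _ hinj
  have hQP : (Q \ P) = K.image (fun i => i - 1) := by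
    ext j
    simp only [Finset.mem_sdiff, hmemQ, Finset.mem_image, hP, hK, Finset.mem_filter,
      Finset.mem_univ, true_and]
    constructor
    · rintro ⟨h1, h2⟩
      refine ⟨j + 1, ⟨h1, ?_⟩, by ring⟩
      rw [add_sub_cancel_right]
      exact not_lt.mp h2
    · rintro ⟨i, ⟨hi1, hi2⟩, rfl⟩
      constructor
      · rwa [sub_add_cancel]
      · exact not_lt.mpr hi2
  have hkcard : (Q \ P).card = K.card := by
    rw [hQP]; exact Finset.card_image_of_injective _ hinj
  have hPQcard : (P \ Q).card = K.card := by
    rw [Finset.card_sdiff_comm hcardQ.symm, hkcard]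
  have hb1 : ∑ i ∈ P \ Q, g i ≤ ((K.card : ℝ)) * (c / 2) := by
    calc ∑ i ∈ P \ Q, g i ≤ ∑ _i ∈ P \ Q, (c / 2) :=
          Finset.sum_le_sum fun i _ => le_trans (le_abs_self _) (hg i)
      _ = ((P \ Q).card : ℝ) * (c / 2) := by rw [Finset.sum_const, nsmul_eq_mul]
      _ = ((K.card : ℝ)) * (c / 2) := by rw [hPQcard]
  have hb2 : -(∑ j ∈ Q \ P, g j) ≤ ((K.card : ℝ)) * (c / 2) := by
    calc -(∑ j ∈ Q \ P, g j) = ∑ j ∈ Q \ P, -g j := by rw [Finset.sum_neg_distrib]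
      _ ≤ ∑ _j ∈ Q \ P, (c / 2) :=
          Finset.sum_le_sum fun i _ => le_trans (neg_le_abs _) (hg i)
      _ = ((Q \ P).card : ℝ) * (c / 2) := by rw [Finset.sum_const, nsmul_eq_mul]
      _ = ((K.card : ℝ)) * (c / 2) := by rw [hkcard]
  have hmain : (∑ i ∈ P, x i) ≤ (K.card : ℝ) * c := by
    rw [hSe]; linarith
  obtain ⟨i0, hi0⟩ := hpos
  have hSpos : 0 < ∑ i ∈ P, x i := by
    refine Finset.sum_pos (fun i hi => (Finset.mem_filter.mp hi).2) ⟨i0, ?_⟩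
    exact Finset.mem_filter.mpr ⟨Finset.mem_univ _, hi0⟩
  have hprod : 0 < (K.card : ℝ) * c := lt_of_lt_of_le hSpos hmain
  have hcpos : 0 < c := by
    by_contra hcn
    push_neg at hcn
    have : (K.card : ℝ) * c ≤ 0 := mul_nonpos_of_nonneg_of_nonpos (Nat.cast_nonneg _) hcn
    linarith
  have hk1 : (1 : ℝ) ≤ (K.card : ℝ) := by
    have hk0 : K.card ≠ 0 := by
      intro h
      rw [h] at hprod
      simp at hprod
    exact_mod_cast Nat.one_le_iff_ne_zero.mpr hk0
  refine ⟨hmain, max_le ?_ ?_⟩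
  · exact mul_nonneg (by linarith) hc
  · rw [sub_one_mul]; linarith
end

section
/- Let f be an acyclic flow with single infeasible vertex x of excess δ > 0, as in the almost-feasible setting: f is a flow in G satisfying arc capacities, whose flow graph f_G is a DAG, with ex(f,x) = δ and ex(f,v) = 0 for v ≠ x. Suppose g is a flow of value δ from the sources to x in f_G and g' a flow of value δ from x to the sinks in f_G (each bounded arcwise by f). Then f - g - g' (arcwise subtraction) is a feasible flow in G of value v(f) - δ; in particular, if v(f) = val(G) + δ, then f - g - g' is a maximum feasible flow in G. -/
open Finset

variable {V : Type} [Fintype V] [DecidableEq V]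

noncomputable def inflow (f : V → V → ℝ) (v : V) : ℝ := ∑ u, f u v

noncomputable def outflow (f : V → V → ℝ) (v : V) : ℝ := ∑ w, f v w

noncomputable def flowValue (S : Finset V) (f : V → V → ℝ) : ℝ :=
  ∑ s ∈ S, (outflow f s - inflow f s)

/-- Feasible flow in `G` (arc capacities, conservation at non-terminals, vertex capacities). -/
def FeasG (c : V → V → ℝ) (cv : V → ℝ) (S T : Finset V) (f : V → V → ℝ) : Prop :=
  (∀ u v, 0 ≤ f u v ∧ f u v ≤ c u v) ∧
  (∀ v, v ∉ S ∪ T → inflow f v = outflow f v ∧ inflow f v ≤ cv v)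

/-- The flow graph of `f` has a directed cycle. -/
def HasFlowCycle (f : V → V → ℝ) : Prop :=
  ∃ (n : ℕ) (w : ℕ → V), 0 < n ∧ w n = w 0 ∧ ∀ i < n, 0 < f (w i) (w (i + 1))

lemma transGen_walk {r : V → V → Prop} {a b : V} (h : Relation.TransGen r a b) :
    ∃ (n : ℕ) (w : ℕ → V), 0 < n ∧ w 0 = a ∧ w n = b ∧ ∀ i < n, r (w i) (w (i + 1)) := by
  induction h with
  | @single c hac =>
    refine ⟨1, fun i => if i = 0 then a else c, one_pos, by simp, by simp, ?_⟩
    intro i hi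
    interval_cases i
    simpa using hac
  | @tail b' c h hbc ih =>
    obtain ⟨n, w, hn, h0, hnb, harcs⟩ := ih
    refine ⟨n + 1, fun i => if i ≤ n then w i else c, n.succ_pos, by simp [h0], by simp, ?_⟩
    intro i hi
    rcases lt_or_eq_of_le (Nat.lt_succ_iff.mp hi) with hlt | heq
    · simp only [Nat.le_of_lt hlt, if_pos, Nat.succ_le_of_lt hlt]
      exact harcs i hlt
    · subst heq
      simp only [le_refl, if_pos, Nat.not_succ_le_self, if_neg, hnb]
      exact hbc

lemma hasFlowCycle_of_transGen {f : V → V → ℝ} {a : V}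
    (h : Relation.TransGen (fun u v => 0 < f u v) a a) : HasFlowCycle f := by
  obtain ⟨n, w, hn, h0, hna, harcs⟩ := transGen_walk h
  exact ⟨n, w, hn, by rw [h0, hna], harcs⟩

/-- Removing the excess of an almost-feasible flow. Let `f` be an acyclic flow in `G`
(satisfying arc capacities and conservation; sources have no incoming and sinks no outgoing
arcs) with a single infeasible vertex `x ∉ S ∪ T` of excess `δ > 0`. Suppose `g` is a flow of
value `δ` from the sources to `x` in the flow graph `f_G` (arcwise bounded by `f`) and `g'` a
flow of value `δ` from `x` to the sinks in `f_G` (arcwise bounded by `f`). Then `f - g - g'`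
(arcwise subtraction) is a feasible flow in `G` of value `v(f) - δ`; in particular, if
`v(f) = val(G) + δ`, then `f - g - g'` is a maximum feasible flow in `G`. -/
theorem stmt_18 (c : V → V → ℝ) (cv : V → ℝ) (S T : Finset V) (hST : Disjoint S T)
    (f g g' : V → V → ℝ) (x : V) (δ : ℝ) (hδ : 0 < δ)
    (hx : x ∉ S ∪ T)
    (hs : ∀ s ∈ S, ∀ u, f u s = 0) (ht : ∀ t ∈ T, ∀ w, f t w = 0)
    (harc : ∀ u v, 0 ≤ f u v ∧ f u v ≤ c u v)
    (hcons : ∀ v, v ∉ S ∪ T → inflow f v = outflow f v)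
    (hacyc : ¬ HasFlowCycle f)
    (hexx : max 0 (inflow f x - cv x) = δ)
    (hex0 : ∀ v, v ∉ S ∪ T → v ≠ x → inflow f v ≤ cv v)
    -- `g` is a flow of value `δ` from the sources to `x` in the flow graph `f_G`
    (hg : ∀ u v, 0 ≤ g u v ∧ g u v ≤ f u v)
    (hgcons : ∀ v, v ∉ S → v ≠ x → inflow g v = outflow g v)
    (hgval : inflow g x - outflow g x = δ)
    -- `g'` is a flow of value `δ` from `x` to the sinks in the flow graph `f_G`
    (hg' : ∀ u v, 0 ≤ g' u v ∧ g' u v ≤ f u v)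
    (hg'cons : ∀ v, v ∉ T → v ≠ x → inflow g' v = outflow g' v)
    (hg'val : outflow g' x - inflow g' x = δ) :
    FeasG c cv S T (fun u v => f u v - g u v - g' u v) ∧
    flowValue S (fun u v => f u v - g u v - g' u v) = flowValue S f - δ ∧
    ∀ valG : ℝ, (∀ w, FeasG c cv S T w → flowValue S w ≤ valG) →
      flowValue S f = valG + δ →
      ∀ w, FeasG c cv S T w →
        flowValue S w ≤ flowValue S (fun u v => f u v - g u v - g' u v) := by
  classical
  have hxS : x ∉ S := fun h => hx (Finset.mem_union_left _ h)
  have hxT : x ∉ T := fun h => hx (Finset.mem_union_right _ h)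
  have hnocyc : ∀ a : V, ¬ Relation.TransGen (fun u v : V => 0 < f u v) a a :=
    fun a ha => hacyc (hasFlowCycle_of_transGen ha)
  have wfF : WellFounded (Relation.TransGen (fun u v : V => 0 < f u v)) := by
    haveI : IsTrans V (Relation.TransGen (fun u v : V => 0 < f u v)) :=
      ⟨fun _ _ _ => Relation.TransGen.trans⟩
    haveI : IsIrrefl V (Relation.TransGen (fun u v : V => 0 < f u v)) := ⟨hnocyc⟩
    exact Finite.wellFounded_of_trans_of_irrefl _
  have wfR : WellFounded (fun a b : V => Relation.TransGen (fun u v : V => 0 < f u v) b a) := by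
    haveI : IsTrans V (fun a b : V => Relation.TransGen (fun u v : V => 0 < f u v) b a) :=
      ⟨fun _ _ _ hab hbc => hbc.trans hab⟩
    haveI : IsIrrefl V (fun a b : V => Relation.TransGen (fun u v : V => 0 < f u v) b a) :=
      ⟨hnocyc⟩
    exact Finite.wellFounded_of_trans_of_irrefl _
  -- every arc with positive `g` flow leads (in the support of `f`) to `x`
  have reachA : ∀ v : V, (∃ u, 0 < g u v) →
      Relation.ReflTransGen (fun a b : V => 0 < f a b) v x := by
    intro v
    refine wfR.induction
      (C := fun v => (∃ u, 0 < g u v) → Relation.ReflTransGen (fun a b : V => 0 < f a b) v x)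
      v ?_
    rintro v ih ⟨u, hu⟩
    by_cases hvx : v = x
    · subst hvx; exact Relation.ReflTransGen.refl
    have hvS : v ∉ S := by
      intro hvS
      have h1 := hs v hvS u
      have h2 := (hg u v).2
      linarith
    have hin : 0 < inflow g v := by
      have : g u v ≤ inflow g v :=
        Finset.single_le_sum (fun i _ => (hg i v).1) (Finset.mem_univ u)
      linarith
    have hout : 0 < outflow g v := (hgcons v hvS hvx) ▸ hin
    obtain ⟨w0, -, hw0⟩ : ∃ w0 ∈ Finset.univ, 0 < g v w0 := by
      by_contra hc
      push_neg at hc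
      have : outflow g v ≤ 0 := Finset.sum_nonpos (fun i hi => hc i hi)
      linarith
    have hfvw : 0 < f v w0 := lt_of_lt_of_le hw0 (hg v w0).2
    exact Relation.ReflTransGen.head hfvw (ih w0 (Relation.TransGen.single hfvw) ⟨v, hw0⟩)
  -- every arc with positive `g'` flow is reachable (in the support of `f`) from `x`
  have reachB : ∀ u : V, (∃ v, 0 < g' u v) →
      Relation.ReflTransGen (fun a b : V => 0 < f a b) x u := by
    intro u
    refine wfF.induction
      (C := fun u => (∃ v, 0 < g' u v) → Relation.ReflTransGen (fun a b : V => 0 < f a b) x u)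
      u ?_
    rintro u ih ⟨v, hv⟩
    by_cases hux : u = x
    · subst hux; exact Relation.ReflTransGen.refl
    have huT : u ∉ T := by
      intro huT
      have h1 := ht u huT v
      have h2 := (hg' u v).2
      linarith
    have hout : 0 < outflow g' u := by
      have : g' u v ≤ outflow g' u :=
        Finset.single_le_sum (fun i _ => (hg' u i).1) (Finset.mem_univ v)
      linarith
    have hin : 0 < inflow g' u := (hg'cons u huT hux) ▸ hout
    obtain ⟨t0, -, ht0⟩ : ∃ t0 ∈ Finset.univ, 0 < g' t0 u := by
      by_contra hc
      push_neg at hc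
      have : inflow g' u ≤ 0 := Finset.sum_nonpos (fun i hi => hc i hi)
      linarith
    have hftu : 0 < f t0 u := lt_of_lt_of_le ht0 (hg' t0 u).2
    exact (ih t0 (Relation.TransGen.single hftu) ⟨u, ht0⟩).tail hftu
  -- the supports of `g` and `g'` share no arcs
  have hdisj : ∀ u v, g u v + g' u v ≤ f u v := by
    intro u v
    rcases le_or_gt (g u v) 0 with hgz | hgz
    · have := (hg u v).1
      have := (hg' u v).2
      linarith
    rcases le_or_gt (g' u v) 0 with hg'z | hg'z
    · have := (hg' u v).1
      have := (hg u v).2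
      linarith
    exfalso
    have hfuv : 0 < f u v := lt_of_lt_of_le hgz (hg u v).2
    have h1 := reachA v ⟨u, hgz⟩
    have h2 := reachB u ⟨v, hg'z⟩
    exact hnocyc v (Relation.TransGen.tail' (h1.trans h2) hfuv)
  have hinnn : ∀ (k : V → V → ℝ), (∀ u v, 0 ≤ k u v) → ∀ v, 0 ≤ inflow k v :=
    fun k hk v => Finset.sum_nonneg (fun u _ => hk u v)
  have houtnn : ∀ (k : V → V → ℝ), (∀ u v, 0 ≤ k u v) → ∀ v, 0 ≤ outflow k v :=
    fun k hk v => Finset.sum_nonneg (fun u _ => hk v u)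
  have hinh : ∀ v, inflow (fun u v => f u v - g u v - g' u v) v
      = inflow f v - inflow g v - inflow g' v := by
    intro v; simp [inflow, Finset.sum_sub_distrib]
  have houth : ∀ v, outflow (fun u v => f u v - g u v - g' u v) v
      = outflow f v - outflow g v - outflow g' v := by
    intro v; simp [outflow, Finset.sum_sub_distrib]
  -- feasibility
  have hfeas : FeasG c cv S T (fun u v => f u v - g u v - g' u v) := by
    constructor
    · intro u v
      refine ⟨?_, ?_⟩ <;> dsimp only
      · have := hdisj u v; linarith
      · have := (harc u v).2
        have := (hg u v).1
        have := (hg' u v).1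
        linarith
    · intro v hv
      have hvS : v ∉ S := fun h => hv (Finset.mem_union_left _ h)
      have hvT : v ∉ T := fun h => hv (Finset.mem_union_right _ h)
      constructor
      · rw [hinh, houth]
        by_cases hvx : v = x
        · subst hvx
          have := hcons v hv
          linarith [hgval, hg'val]
        · rw [hcons v hv, hgcons v hvS hvx, hg'cons v hvT hvx]
      · rw [hinh]
        by_cases hvx : v = x
        · subst hvx
          have h1 : δ ≤ inflow g v := by
            have := houtnn g (fun a b => (hg a b).1) v
            linarith
          have h2 : 0 ≤ inflow g' v := hinnn g' (fun a b => (hg' a b).1) v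
          have h3 : inflow f v - cv v = δ := by
            rcases max_cases (0 : ℝ) (inflow f v - cv v) with ⟨hm, _⟩ | ⟨hm, _⟩ <;>
              rw [hm] at hexx <;> linarith
          linarith
        · have h1 := hex0 v hv hvx
          have h2 := hinnn g (fun u v => (hg u v).1) v
          have h3 := hinnn g' (fun u v => (hg' u v).1) v
          linarith
  -- value computation
  have hinfS : ∀ s ∈ S, inflow f s = 0 :=
    fun s hsS => Finset.sum_eq_zero (fun u _ => hs s hsS u)
  have htotal : ∀ (k : V → V → ℝ), ∑ v, (outflow k v - inflow k v) = 0 := by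
    intro k
    rw [Finset.sum_sub_distrib, sub_eq_zero]
    exact Finset.sum_comm
  have hvg : ∑ s ∈ S, (outflow g s - inflow g s) = δ := by
    have hsplit := Finset.sum_add_sum_compl S (fun v => outflow g v - inflow g v)
    rw [htotal g] at hsplit
    have h2 : ∑ v ∈ Sᶜ, (outflow g v - inflow g v) = -δ := by
      rw [Finset.sum_eq_single_of_mem x (Finset.mem_compl.mpr hxS)]
      · linarith
      · intro v hv hvx
        rw [hgcons v (Finset.mem_compl.mp hv) hvx]; ring
    linarith
  have hvg' : ∑ s ∈ S, (outflow g' s - inflow g' s) = 0 := by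
    refine Finset.sum_eq_zero (fun s hsS => ?_)
    have hsT : s ∉ T := Finset.disjoint_left.mp hST hsS
    have hsx : s ≠ x := fun h => hxS (h ▸ hsS)
    rw [hg'cons s hsT hsx]; ring
  have hval : flowValue S (fun u v => f u v - g u v - g' u v) = flowValue S f - δ := by
    simp only [flowValue]
    calc ∑ s ∈ S, (outflow (fun u v => f u v - g u v - g' u v) s
          - inflow (fun u v => f u v - g u v - g' u v) s)
        = ∑ s ∈ S, ((outflow f s - inflow f s) - (outflow g s - inflow g s)
          - (outflow g' s - inflow g' s)) :=
          Finset.sum_congr rfl (fun s _ => by rw [hinh, houth]; ring)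
      _ = ∑ s ∈ S, (outflow f s - inflow f s) - ∑ s ∈ S, (outflow g s - inflow g s)
          - ∑ s ∈ S, (outflow g' s - inflow g' s) := by
          rw [Finset.sum_sub_distrib, Finset.sum_sub_distrib]
      _ = ∑ s ∈ S, (outflow f s - inflow f s) - δ := by rw [hvg, hvg']; ring
  refine ⟨hfeas, hval, ?_⟩
  intro valG hub heq w hw
  have := hub w hw
  rw [hval]
  linarith
end
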